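/- arXiv:2112.11406 — 3 statements merged into one kernel-verified Lean document; each statement's English description precedes it below -/
import Mathlib

section
/- Let (A*, R*) ∈ C_A × C_R be a partial optimum of J on C_A × C_R, i.e. J(A*, R*) ≤ J(A, R*) for all A ∈ C_A and J(A*, R*) ≤ J(A*, R) for all R ∈ C_R. Let U(R*) = {A ∈ C_A : J(A, R*) ≤ J(A', R*) for all A' ∈ C_A} and V(A*) = {R ∈ C_R : J(A*, R) ≤ J(A*, R') for all R' ∈ C_R}. If (A*, R*) is a local minimum of J on C_A × C_R, then J(A*, R*) ≤ J(A, R) for all A ∈ U(R*) and R ∈ V(A*). -/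
/-
Both `J(·, R)` and `J(A, ·)` are convex quadratics. Put `J* = J(A*, R*)`, `A_τ = A* + τ(A - A*)`
and `R_τ = R* + τ(R - R*)`, and choose `τ ∈ (0, 1]` so small that local minimality gives
`J* ≤ J(A_τ, R_τ)`. Convexity in `R`, together with `J(A*, R) ≤ J*`, gives `J(A*, R_τ) ≤ J*`;
convexity in `A` along the segment from `A*` to `A` then forces `J* ≤ J(A, R_τ)`; and convexity
in `R` along the segment from `R*` to `R`, with `J(A, R*) ≤ J*`, finally forces `J* ≤ J(A, R)`.
-/

open Matrix

/-- The feasible set for the material maps. -/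
def adjustCA (N M : ℕ) : Set (Matrix (Fin N) (Fin M) ℝ) :=
  {X | (∀ i j, 0 ≤ X i j) ∧ ∀ i, (∑ j, X i j) ≤ 1}

/-- The feasible set for the dictionary coefficients. -/
def adjustCR (M D : ℕ) : Set (Matrix (Fin M) (Fin D) ℝ) :=
  {X | (∀ i j, 0 ≤ X i j) ∧ (∀ i, (∑ j, X i j) ≤ 1) ∧ ∀ j, (∑ i, X i j) ≤ 1}

/-- The ADJUST objective `J(A,R) = (1/2)‖Y − W·A·R·T‖_F²` with `‖X‖_F² = Tr(XᵀX)`. -/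
noncomputable def adjustJ {N M D C J : ℕ}
    (W : Matrix (Fin J) (Fin N) ℝ) (T : Matrix (Fin D) (Fin C) ℝ)
    (Y : Matrix (Fin J) (Fin C) ℝ)
    (A : Matrix (Fin N) (Fin M) ℝ) (R : Matrix (Fin M) (Fin D) ℝ) : ℝ :=
  (1 / 2) * Matrix.trace ((Y - W * A * R * T)ᵀ * (Y - W * A * R * T))

open Set Filter Topology AffineMap

section SeparatelyConvex

variable {E F : Type*} [AddCommGroup E] [Module ℝ E] [AddCommGroup F] [Module ℝ F]

theorem ConvexOn.le_of_le_lineMap {s : Set E} {g : E → ℝ} (hg : ConvexOn ℝ s g) {x y : E}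
    (hx : x ∈ s) (hy : y ∈ s) {τ c : ℝ} (hτ : τ ∈ Ioc 0 1) (hc : g x ≤ c)
    (h : c ≤ g (lineMap x y τ)) : c ≤ g y := by
  rw [lineMap_apply_module] at h
  exact h.trans <| hg.le_right_of_left_le' hx hy (sub_nonneg.2 hτ.2) hτ.1 (sub_add_cancel 1 τ)
    (hc.trans h)

variable [TopologicalSpace E] [IsTopologicalAddGroup E] [ContinuousSMul ℝ E]
  [TopologicalSpace F] [IsTopologicalAddGroup F] [ContinuousSMul ℝ F]

theorem IsLocalMinOn.exists_le_lineMap {β : Type*} [Preorder β] {f : E → β} {s : Set E}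
    {a b : E} (hf : IsLocalMinOn f s a) (hs : Convex ℝ s) (ha : a ∈ s) (hb : b ∈ s) :
    ∃ τ ∈ Ioc (0 : ℝ) 1, f a ≤ f (lineMap a b τ) := by
  have hγ : Tendsto (lineMap a b) (𝓝[Ioc 0 1] (0 : ℝ)) (𝓝[s] a) := by
    refine tendsto_nhdsWithin_iff.2 ⟨?_, ?_⟩
    · exact (lineMap_continuous.tendsto' 0 a (by simp)).mono_left nhdsWithin_le_nhds
    · exact eventually_nhdsWithin_of_forall fun τ hτ =>
        hs.lineMap_mem ha hb ⟨hτ.1.le, hτ.2⟩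
  have := left_nhdsWithin_Ioc_neBot (zero_lt_one' ℝ)
  obtain ⟨τ, hle, hτ⟩ := ((hγ.eventually hf).and self_mem_nhdsWithin).exists
  exact ⟨τ, hτ, hle⟩

theorem IsLocalMinOn.le_apply_of_separately_convexOn {f : E × F → ℝ} {s : Set E} {t : Set F}
    (hf₁ : ∀ y ∈ t, ConvexOn ℝ s fun x => f (x, y))
    (hf₂ : ∀ x ∈ s, ConvexOn ℝ t fun y => f (x, y))
    {x₀ x : E} {y₀ y : F} (hx₀ : x₀ ∈ s) (hy₀ : y₀ ∈ t) (hx : x ∈ s) (hy : y ∈ t)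
    (hloc : IsLocalMinOn f (s ×ˢ t) (x₀, y₀))
    (hxle : f (x, y₀) ≤ f (x₀, y₀)) (hyle : f (x₀, y) ≤ f (x₀, y₀)) :
    f (x₀, y₀) ≤ f (x, y) := by
  have hs := (hf₁ y₀ hy₀).1
  have ht := (hf₂ x₀ hx₀).1
  obtain ⟨τ, hτ, hlocτ⟩ := hloc.exists_le_lineMap (hs.prod ht) (mk_mem_prod hx₀ hy₀)
    (mk_mem_prod hx hy)
  rw [← Prod.mk.eta (p := lineMap _ _ τ), fst_lineMap, snd_lineMap] at hlocτ
  have hyτ : lineMap y₀ y τ ∈ t := ht.lineMap_mem hy₀ hy ⟨hτ.1.le, hτ.2⟩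
  have hx₀yτ : f (x₀, lineMap y₀ y τ) ≤ f (x₀, y₀) :=
    ((hf₂ x₀ hx₀).le_on_segment hy₀ hy (lineMap_mem_segment ℝ y₀ y ⟨hτ.1.le, hτ.2⟩)).trans
      (max_le le_rfl hyle)
  have hxyτ : f (x₀, y₀) ≤ f (x, lineMap y₀ y τ) :=
    (hf₁ _ hyτ).le_of_le_lineMap hx₀ hx hτ hx₀yτ hlocτ
  exact (hf₂ x hx).le_of_le_lineMap hy₀ hy hτ hxle hxyτ

end SeparatelyConvex

section Matrix

variable {m n : Type*} [Fintype m] [Fintype n]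

theorem Matrix.trace_transpose_mul_self_nonneg (X : Matrix m n ℝ) : 0 ≤ trace (Xᵀ * X) :=
  Finset.sum_nonneg fun _ _ => Finset.sum_nonneg fun _ _ => mul_self_nonneg _

theorem Matrix.convexOn_trace_transpose_mul_self :
    ConvexOn ℝ univ fun X : Matrix m n ℝ => trace (Xᵀ * X) := by
  refine ⟨convex_univ, fun X _ Y _ a b ha hb hab => ?_⟩
  have hdefect : a • trace (Xᵀ * X) + b • trace (Yᵀ * Y)
      - trace ((a • X + b • Y)ᵀ * (a • X + b • Y)) = a * b * trace ((X - Y)ᵀ * (X - Y)) := by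
    obtain rfl : b = 1 - a := by linarith
    simp only [transpose_add, transpose_sub, transpose_smul, Matrix.add_mul, Matrix.mul_add,
      Matrix.sub_mul, Matrix.mul_sub, Matrix.smul_mul, Matrix.mul_smul, trace_add, trace_sub,
      trace_smul, smul_eq_mul]
    ring
  nlinarith [mul_nonneg (mul_nonneg ha hb) (trace_transpose_mul_self_nonneg (X - Y))]

end Matrix

section Adjust

theorem convex_adjustCA (N M : ℕ) : Convex ℝ (adjustCA N M) := by
  rintro X ⟨hX₀, hX₁⟩ X' ⟨hX'₀, hX'₁⟩ a b ha hb hab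
  simp only [adjustCA, mem_ofPred_eq, Matrix.add_apply, Matrix.smul_apply, smul_eq_mul,
    Finset.sum_add_distrib, ← Finset.mul_sum]
  exact ⟨fun i j => add_nonneg (mul_nonneg ha (hX₀ i j)) (mul_nonneg hb (hX'₀ i j)),
    fun i => by nlinarith [hX₁ i, hX'₁ i]⟩

theorem convex_adjustCR (M D : ℕ) : Convex ℝ (adjustCR M D) := by
  rintro X ⟨hX₀, hX₁, hX₂⟩ X' ⟨hX'₀, hX'₁, hX'₂⟩ a b ha hb hab
  simp only [adjustCR, mem_ofPred_eq, Matrix.add_apply, Matrix.smul_apply, smul_eq_mul,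
    Finset.sum_add_distrib, ← Finset.mul_sum]
  exact ⟨fun i j => add_nonneg (mul_nonneg ha (hX₀ i j)) (mul_nonneg hb (hX'₀ i j)),
    fun i => by nlinarith [hX₁ i, hX'₁ i], fun j => by nlinarith [hX₂ j, hX'₂ j]⟩

variable {N M D C J : ℕ} (W : Matrix (Fin J) (Fin N) ℝ) (T : Matrix (Fin D) (Fin C) ℝ)
  (Y : Matrix (Fin J) (Fin C) ℝ)

theorem convexOn_adjustJ_left (R : Matrix (Fin M) (Fin D) ℝ) :
    ConvexOn ℝ univ fun A => adjustJ W T Y A R := by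
  have h := (convexOn_trace_transpose_mul_self.smul (by norm_num : (0 : ℝ) ≤ 1 / 2)).comp_affineMap
    (AffineMap.const ℝ (Matrix (Fin N) (Fin M) ℝ) Y - (mulRightLinearMap (Fin J) ℝ T ∘ₗ
      mulRightLinearMap (Fin J) ℝ R ∘ₗ mulLeftLinearMap (Fin M) ℝ W).toAffineMap)
  rwa [preimage_univ] at h

theorem convexOn_adjustJ_right (A : Matrix (Fin N) (Fin M) ℝ) :
    ConvexOn ℝ univ fun R => adjustJ W T Y A R := by
  have h := (convexOn_trace_transpose_mul_self.smul (by norm_num : (0 : ℝ) ≤ 1 / 2)).comp_affineMap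
    (AffineMap.const ℝ (Matrix (Fin M) (Fin D) ℝ) Y - (mulRightLinearMap (Fin J) ℝ T ∘ₗ
      mulLeftLinearMap (Fin D) ℝ (W * A)).toAffineMap)
  rwa [preimage_univ] at h

end Adjust

theorem partial_optimum_local_min_general (N M D C J : ℕ)
    (W : Matrix (Fin J) (Fin N) ℝ) (T : Matrix (Fin D) (Fin C) ℝ)
    (Y : Matrix (Fin J) (Fin C) ℝ)
    (Astar : Matrix (Fin N) (Fin M) ℝ) (Rstar : Matrix (Fin M) (Fin D) ℝ)
    (hAstar : Astar ∈ adjustCA N M) (hRstar : Rstar ∈ adjustCR M D)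
    (hloc : IsLocalMinOn
        (fun p : Matrix (Fin N) (Fin M) ℝ × Matrix (Fin M) (Fin D) ℝ =>
          adjustJ W T Y p.1 p.2)
        (adjustCA N M ×ˢ adjustCR M D) (Astar, Rstar)) :
    ∀ A ∈ {A ∈ adjustCA N M | ∀ A' ∈ adjustCA N M,
        adjustJ W T Y A Rstar ≤ adjustJ W T Y A' Rstar},
      ∀ R ∈ {R ∈ adjustCR M D | ∀ R' ∈ adjustCR M D,
          adjustJ W T Y Astar R ≤ adjustJ W T Y Astar R'},
        adjustJ W T Y Astar Rstar ≤ adjustJ W T Y A R := by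
  rintro A ⟨hA, hAmin⟩ R ⟨hR, hRmin⟩
  exact hloc.le_apply_of_separately_convexOn
    (fun R _ => (convexOn_adjustJ_left W T Y R).subset (subset_univ _) (convex_adjustCA N M))
    (fun A _ => (convexOn_adjustJ_right W T Y A).subset (subset_univ _) (convex_adjustCR M D))
    hAstar hRstar hA hR (hAmin Astar hAstar) (hRmin Rstar hRstar)

/-- If a partial optimum `(A*, R*)` of `J` on `C_A × C_R` is a local minimum of `J` on
`C_A × C_R`, then `J(A*,R*) ≤ J(A,R)` for all `A ∈ U(R*)` and `R ∈ V(A*)`, where `U(R*)`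
(resp. `V(A*)`) is the set of minimizers of `J(·,R*)` over `C_A` (resp. of `J(A*,·)` over
`C_R`). -/
theorem partial_optimum_local_min (N M D C J : ℕ)
    (hN : 0 < N) (hM : 0 < M) (hD : 0 < D) (hC : 0 < C) (hJ : 0 < J)
    (W : Matrix (Fin J) (Fin N) ℝ) (T : Matrix (Fin D) (Fin C) ℝ)
    (Y : Matrix (Fin J) (Fin C) ℝ)
    (Astar : Matrix (Fin N) (Fin M) ℝ) (Rstar : Matrix (Fin M) (Fin D) ℝ)
    (hAstar : Astar ∈ adjustCA N M) (hRstar : Rstar ∈ adjustCR M D)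
    (hpartA : ∀ A ∈ adjustCA N M, adjustJ W T Y Astar Rstar ≤ adjustJ W T Y A Rstar)
    (hpartR : ∀ R ∈ adjustCR M D, adjustJ W T Y Astar Rstar ≤ adjustJ W T Y Astar R)
    (hloc : IsLocalMinOn
        (fun p : Matrix (Fin N) (Fin M) ℝ × Matrix (Fin M) (Fin D) ℝ =>
          adjustJ W T Y p.1 p.2)
        (adjustCA N M ×ˢ adjustCR M D) (Astar, Rstar)) :
    ∀ A ∈ {A ∈ adjustCA N M | ∀ A' ∈ adjustCA N M,
        adjustJ W T Y A Rstar ≤ adjustJ W T Y A' Rstar},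
      ∀ R ∈ {R ∈ adjustCR M D | ∀ R' ∈ adjustCR M D,
          adjustJ W T Y Astar R ≤ adjustJ W T Y Astar R'},
        adjustJ W T Y Astar Rstar ≤ adjustJ W T Y A R :=
  partial_optimum_local_min_general N M D C J W T Y Astar Rstar hAstar hRstar hloc
end

section
/- Let E be a real Hilbert space, C₁, C₂ ⊆ E nonempty closed convex sets, and Z ∈ E. Define G(X, Y) = (1/2)‖X − Z‖² + (1/2)‖X − Y‖². Then (X*, Y*) ∈ C₁ × C₂ minimizes G over C₁ × C₂ if and only if X* = proj_{C₁}((Z + Y*)/2) and Y* = proj_{C₂}(X*); in particular, at any minimizer, Y* is a fixed point of the map Y ↦ proj_{C₂}(proj_{C₁}((Z + Y)/2)). -/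
/-!
For fixed `Y`, completing the square gives `G(X, Y) = ‖(Z + Y)/2 - X‖² + ‖Z - Y‖²/4`, and for
fixed `X` the `Y`-dependence of `G` is `‖X - Y‖²/2`; so a minimizer over `C₁ × C₂` is in each
variable separately a closest point. Conversely, `G` is quadratic, and its exact second-order
expansion at `(X*, Y*)` has a nonnegative quadratic part and a linear part which is nonnegative
on `C₁ × C₂` by the variational inequality characterizing closest points of convex sets.
-/

open RealInnerProductSpace

section

variable {E : Type*} [NormedAddCommGroup E] [InnerProductSpace ℝ E]

theorem real_inner_le_zero_of_forall_norm_sub_le {K : Set E} (hK : Convex ℝ K) {u v : E}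
    (hv : v ∈ K) (hmin : ∀ w ∈ K, ‖u - v‖ ≤ ‖u - w‖) : ∀ w ∈ K, ⟪u - v, w - v⟫ ≤ 0 := by
  have : Nonempty K := ⟨⟨v, hv⟩⟩
  refine (norm_eq_iInf_iff_real_inner_le_zero hK hv).1 (le_antisymm ?_ ?_)
  · exact le_ciInf fun w => hmin w w.2
  · exact ciInf_le (f := fun w : K => ‖u - w‖) ⟨0, Set.forall_mem_range.2 fun _ => norm_nonneg _⟩
      ⟨v, hv⟩

theorem half_norm_sub_sq_add_half_norm_sub_sq (Z Y X : E) :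
    (1 / 2) * ‖X - Z‖ ^ 2 + (1 / 2) * ‖X - Y‖ ^ 2
      = ‖(2:ℝ)⁻¹ • (Z + Y) - X‖ ^ 2 + 4⁻¹ * ‖Z - Y‖ ^ 2 := by
  simp only [← real_inner_self_eq_norm_sq, inner_sub_left, inner_sub_right, inner_add_left,
    inner_add_right, real_inner_smul_left, real_inner_smul_right, real_inner_comm Z X,
    real_inner_comm Y X, real_inner_comm Z Y]
  ring

theorem half_norm_sub_sq_add_half_norm_sub_sq_sub_eq (Z X₀ Y₀ X Y : E) :
    ((1 / 2) * ‖X - Z‖ ^ 2 + (1 / 2) * ‖X - Y‖ ^ 2)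
        - ((1 / 2) * ‖X₀ - Z‖ ^ 2 + (1 / 2) * ‖X₀ - Y₀‖ ^ 2)
      = -2 * ⟪(2:ℝ)⁻¹ • (Z + Y₀) - X₀, X - X₀⟫ - ⟪X₀ - Y₀, Y - Y₀⟫
        + (1 / 2) * ‖X - X₀‖ ^ 2 + (1 / 2) * ‖(X - X₀) - (Y - Y₀)‖ ^ 2 := by
  simp only [← real_inner_self_eq_norm_sq, inner_sub_left, inner_sub_right, inner_add_left,
    real_inner_smul_left, real_inner_comm Z X, real_inner_comm Y X, real_inner_comm Z X₀,
    real_inner_comm Y₀ X₀, real_inner_comm Y₀ X, real_inner_comm Y₀ Y, real_inner_comm X₀ Y,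
    real_inner_comm X₀ X]
  ring

end

theorem min_iff_projections_general
    {E : Type*} [NormedAddCommGroup E] [InnerProductSpace ℝ E]
    (C₁ C₂ : Set E)
    (h1conv : Convex ℝ C₁)
    (h2conv : Convex ℝ C₂)
    (Z Xstar Ystar : E) (hX : Xstar ∈ C₁) (hY : Ystar ∈ C₂) :
    (∀ X ∈ C₁, ∀ Y ∈ C₂,
        (1 / 2) * ‖Xstar - Z‖ ^ 2 + (1 / 2) * ‖Xstar - Ystar‖ ^ 2 ≤
          (1 / 2) * ‖X - Z‖ ^ 2 + (1 / 2) * ‖X - Y‖ ^ 2) ↔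
      ((∀ w ∈ C₁, ‖(2:ℝ)⁻¹ • (Z + Ystar) - Xstar‖ ≤ ‖(2:ℝ)⁻¹ • (Z + Ystar) - w‖) ∧
       (∀ w ∈ C₂, ‖Xstar - Ystar‖ ≤ ‖Xstar - w‖)) := by
  constructor
  · intro hmin
    refine ⟨fun w hw => ?_, fun w hw => ?_⟩
    · have h := hmin w hw Ystar hY
      rw [half_norm_sub_sq_add_half_norm_sub_sq, half_norm_sub_sq_add_half_norm_sub_sq] at h
      exact (sq_le_sq₀ (norm_nonneg _) (norm_nonneg _)).1 (by linarith)
    · have h := hmin Xstar hX w hw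
      exact (sq_le_sq₀ (norm_nonneg _) (norm_nonneg _)).1 (by linarith)
  · rintro ⟨hproj₁, hproj₂⟩ X hX' Y hY'
    have h₁ := real_inner_le_zero_of_forall_norm_sub_le h1conv hX hproj₁ X hX'
    have h₂ := real_inner_le_zero_of_forall_norm_sub_le h2conv hY hproj₂ Y hY'
    have hexp := half_norm_sub_sq_add_half_norm_sub_sq_sub_eq Z Xstar Ystar X Y
    linarith [sq_nonneg ‖X - Xstar‖, sq_nonneg ‖(X - Xstar) - (Y - Ystar)‖]

/-- In a real Hilbert space, `(X*, Y*) ∈ C₁ × C₂` minimizes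
`G(X,Y) = (1/2)‖X − Z‖² + (1/2)‖X − Y‖²` over `C₁ × C₂` if and only if `X*` is the metric
projection of `(Z + Y*)/2` onto `C₁` and `Y*` is the metric projection of `X*` onto `C₂`
(projections expressed by their closest-point characterization); in particular `Y*` is a
fixed point of `Y ↦ proj_{C₂}(proj_{C₁}((Z + Y)/2))`. -/
theorem min_iff_projections
    {E : Type*} [NormedAddCommGroup E] [InnerProductSpace ℝ E] [CompleteSpace E]
    (C₁ C₂ : Set E)
    (h1ne : C₁.Nonempty) (h1closed : IsClosed C₁) (h1conv : Convex ℝ C₁)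
    (h2ne : C₂.Nonempty) (h2closed : IsClosed C₂) (h2conv : Convex ℝ C₂)
    (Z Xstar Ystar : E) (hX : Xstar ∈ C₁) (hY : Ystar ∈ C₂) :
    (∀ X ∈ C₁, ∀ Y ∈ C₂,
        (1 / 2) * ‖Xstar - Z‖ ^ 2 + (1 / 2) * ‖Xstar - Ystar‖ ^ 2 ≤
          (1 / 2) * ‖X - Z‖ ^ 2 + (1 / 2) * ‖X - Y‖ ^ 2) ↔
      ((∀ w ∈ C₁, ‖(2:ℝ)⁻¹ • (Z + Ystar) - Xstar‖ ≤ ‖(2:ℝ)⁻¹ • (Z + Ystar) - w‖) ∧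
       (∀ w ∈ C₂, ‖Xstar - Ystar‖ ≤ ‖Xstar - w‖)) :=
  min_iff_projections_general C₁ C₂ h1conv h2conv Z Xstar Ystar hX hY
end

section
/- Let S = {x ∈ ℝ^M : x_j ≥ 0 for all j, and ∑_{j=1}^M x_j ≤ 1} and let z ∈ ℝ^M. Suppose λ* ≥ 0 satisfies ∑_{j=1}^M max(z_j − λ*, 0) ≤ 1 together with the complementarity condition λ* · (∑_{j=1}^M max(z_j − λ*, 0) − 1) = 0. Then the vector x* with entries x*_j = max(z_j − λ*, 0) is the Euclidean metric projection of z onto S, i.e. the unique point of S minimizing the Euclidean distance to z. -/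
/-! Write `x*ⱼ = max(zⱼ − λ*, 0)`. Coordinatewise, `(zⱼ − x*ⱼ)(wⱼ − x*ⱼ) ≤ λ*(wⱼ − x*ⱼ)` for every
`wⱼ ≥ 0`, so `⟪z − x*, w − x*⟫ ≤ λ*(∑ wⱼ − ∑ x*ⱼ)`, which is `≤ 0` on `S` by complementarity. This
variational inequality makes `x*` the metric projection: `‖z − w‖² ≥ ‖z − x*‖² + ‖w − x*‖²`. -/

open Finset InnerProductSpace

section VariationalInequality

variable {E : Type*} [NormedAddCommGroup E] [InnerProductSpace ℝ E]

theorem norm_sub_sq_add_norm_sub_sq_le_of_inner_le_zero {z x w : E} (h : ⟪z - x, w - x⟫_ℝ ≤ 0) :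
    ‖z - x‖ ^ 2 + ‖w - x‖ ^ 2 ≤ ‖z - w‖ ^ 2 := by
  have hexpand : ‖z - w‖ ^ 2 = ‖z - x‖ ^ 2 - 2 * ⟪z - x, w - x⟫_ℝ + ‖w - x‖ ^ 2 := by
    rw [← norm_sub_sq_real, sub_sub_sub_cancel_right]
  linarith

theorem norm_sub_le_of_inner_le_zero {z x w : E} (h : ⟪z - x, w - x⟫_ℝ ≤ 0) :
    ‖z - x‖ ≤ ‖z - w‖ := by
  have := norm_sub_sq_add_norm_sub_sq_le_of_inner_le_zero h
  exact (pow_le_pow_iff_left₀ (norm_nonneg _) (norm_nonneg _) two_ne_zero).1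
    (by linarith [sq_nonneg ‖w - x‖])

theorem eq_of_inner_le_zero_of_norm_sub_eq {z x w : E} (h : ⟪z - x, w - x⟫_ℝ ≤ 0)
    (heq : ‖z - w‖ = ‖z - x‖) : w = x := by
  have := norm_sub_sq_add_norm_sub_sq_le_of_inner_le_zero h
  rw [heq] at this
  have : ‖w - x‖ = 0 := by nlinarith [norm_nonneg (w - x)]
  exact sub_eq_zero.1 (norm_eq_zero.1 this)

end VariationalInequality

theorem sub_max_sub_mul_le {a lam w : ℝ} (hw : 0 ≤ w) :
    (a - max (a - lam) 0) * (w - max (a - lam) 0) ≤ lam * (w - max (a - lam) 0) := by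
  rcases le_total lam a with h | h
  · rw [max_eq_left (sub_nonneg.2 h)]
    rw [sub_sub_cancel]
  · rw [max_eq_right (sub_nonpos.2 h), sub_zero, sub_zero]
    exact mul_le_mul_of_nonneg_right h hw

theorem inner_sub_le_of_forall_eq_max_sub {ι : Type*} [Fintype ι] {z x w : EuclideanSpace ℝ ι}
    {lam : ℝ} (hx : ∀ j, x j = max (z j - lam) 0) (hw : ∀ j, 0 ≤ w j) :
    ⟪z - x, w - x⟫_ℝ ≤ lam * (∑ j, w j - ∑ j, x j) := by
  rw [PiLp.inner_apply, mul_sub, mul_sum, mul_sum, ← sum_sub_distrib]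
  refine sum_le_sum fun j _ => ?_
  simp only [PiLp.sub_apply, Real.inner_apply, ← mul_sub, hx]
  exact sub_max_sub_mul_le (hw j)

theorem simplex_projection_formula_general (M : ℕ)
    (z : EuclideanSpace ℝ (Fin M)) (lam : ℝ) (hlam : 0 ≤ lam)
    (hfeas : (∑ j, max (z j - lam) 0) ≤ 1)
    (hcomp : lam * ((∑ j, max (z j - lam) 0) - 1) = 0) :
    ∀ xstar : EuclideanSpace ℝ (Fin M), (∀ j, xstar j = max (z j - lam) 0) →
      ((∀ j, 0 ≤ xstar j) ∧ (∑ j, xstar j) ≤ 1) ∧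
      (∀ w : EuclideanSpace ℝ (Fin M), ((∀ j, 0 ≤ w j) ∧ (∑ j, w j) ≤ 1) →
        ‖z - xstar‖ ≤ ‖z - w‖) ∧
      (∀ w : EuclideanSpace ℝ (Fin M), ((∀ j, 0 ≤ w j) ∧ (∑ j, w j) ≤ 1) →
        ‖z - w‖ = ‖z - xstar‖ → w = xstar) := by
  intro x hx
  have hsum : ∑ j, x j = ∑ j, max (z j - lam) 0 := sum_congr rfl fun j _ => hx j
  have hinner_nonpos : ∀ w : EuclideanSpace ℝ (Fin M), ((∀ j, 0 ≤ w j) ∧ ∑ j, w j ≤ 1) →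
      ⟪z - x, w - x⟫_ℝ ≤ 0 := by
    rintro w ⟨hw, hwsum⟩
    refine (inner_sub_le_of_forall_eq_max_sub hx hw).trans ?_
    rcases mul_eq_zero.1 hcomp with hlam0 | hsum1
    · simp [hlam0]
    · exact mul_nonpos_of_nonneg_of_nonpos hlam (by linarith)
  refine ⟨⟨fun j => (hx j).symm ▸ le_max_right _ _, hsum ▸ hfeas⟩,
    fun w hw => norm_sub_le_of_inner_le_zero (hinner_nonpos w hw),
    fun w hw => eq_of_inner_le_zero_of_norm_sub_eq (hinner_nonpos w hw)⟩

/-- Projection onto the simplex-type set `S = {x ∈ ℝ^M : x ≥ 0, ∑ⱼ xⱼ ≤ 1}`: if `λ* ≥ 0`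
satisfies `∑ⱼ max(zⱼ − λ*, 0) ≤ 1` and the complementarity condition
`λ*·(∑ⱼ max(zⱼ − λ*, 0) − 1) = 0`, then the vector `x*` with entries
`x*ⱼ = max(zⱼ − λ*, 0)` is the (unique) Euclidean metric projection of `z` onto `S`. -/
theorem simplex_projection_formula (M : ℕ) (hM : 0 < M)
    (z : EuclideanSpace ℝ (Fin M)) (lam : ℝ) (hlam : 0 ≤ lam)
    (hfeas : (∑ j, max (z j - lam) 0) ≤ 1)
    (hcomp : lam * ((∑ j, max (z j - lam) 0) - 1) = 0) :
    ∀ xstar : EuclideanSpace ℝ (Fin M), (∀ j, xstar j = max (z j - lam) 0) →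
      ((∀ j, 0 ≤ xstar j) ∧ (∑ j, xstar j) ≤ 1) ∧
      (∀ w : EuclideanSpace ℝ (Fin M), ((∀ j, 0 ≤ w j) ∧ (∑ j, w j) ≤ 1) →
        ‖z - xstar‖ ≤ ‖z - w‖) ∧
      (∀ w : EuclideanSpace ℝ (Fin M), ((∀ j, 0 ≤ w j) ∧ (∑ j, w j) ≤ 1) →
        ‖z - w‖ = ‖z - xstar‖ → w = xstar) :=
  simplex_projection_formula_general M z lam hlam hfeas hcomp
end
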